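/- Let S ⊆ {1,…,12} be such that MAIS(G*_S) < α(G*_{S,u}). Then for every finite alphabet A with |A| ≥ 2, every positive integer m, and every valid index code of length ℓ with locality 1 for the three-receiver unicast problem B*_S, the observation sets satisfy R_i ∩ R_j = ∅ for all 1 ≤ i < j ≤ 3. -/

import Mathlib

/-!
The edges of `G*_u` are those of three copies of `K_{2,2}`, on `{1,2} × {5,6}`, `{1,3} × {9,10}`
and `{5,7} × {9,11}`, and a directed cycle inside an independent set of `G*_u` uses one-way
edges only; these force it to contain one of the triangles `3 → 6 → 11 → 3`, `2 → 10 → 7 → 2`.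
If `S` contained an edge of `G*_u`, exchanging a vertex of that triangle for an endpoint of the
edge would make every independent set of `G*_{S,u}` acyclic without shrinking it, so
`α ≤ MAIS`. Hence `S` is independent in `G*_u`, and for `i < j` either receiver `j` has no
side information in `Wᵢ` or receiver `i` none in `Wⱼ`; say the former. With all messages
outside `Wᵢ ∪ Wⱼ` fixed, receiver `j` decodes its messages from `Rⱼ` alone and then receiver
`i` decodes its own from `Rᵢ`, so `|A| ^ (m |(Wᵢ ∪ Wⱼ) ∩ S|) ≤ |A| ^ |Rᵢ ∪ Rⱼ|`, and locality
leaves no room for `Rᵢ ∩ Rⱼ`.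
-/

/-- The want sets `W₁, W₂, W₃` of the three receivers. -/
def Wset : Fin 3 → Finset ℕ
  | 0 => {1, 2, 3, 4}
  | 1 => {5, 6, 7, 8}
  | 2 => {9, 10, 11, 12}

/-- The side information sets `K₁, K₂, K₃` of the three receivers. -/
def Kset : Fin 3 → Finset ℕ
  | 0 => {5, 6, 9, 10}
  | 1 => {1, 2, 9, 11}
  | 2 => {1, 3, 5, 7}

/-- Directed edge relation of the side information graph `G*` on `{1, …, 12}`:
`(a, b)` is an edge iff `a ∈ Wᵢ` and `b ∈ Kᵢ` for the (unique) `i` with `a ∈ Wᵢ`. -/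
def Gedge (a b : ℕ) : Prop := ∃ i : Fin 3, a ∈ Wset i ∧ b ∈ Kset i

/-- The underlying undirected side information graph `G*ᵤ`: distinct `a, b` are adjacent iff
both `(a, b)` and `(b, a)` are directed edges of `G*`. -/
def Gu : SimpleGraph ℕ where
  Adj a b := a ≠ b ∧ Gedge a b ∧ Gedge b a
  symm := by
    constructor
    intro a b h
    exact ⟨h.1.symm, h.2.2, h.2.1⟩
  loopless := by
    constructor
    intro a h
    exact h.1 rfl

/-- A directed cycle (of length `k + 2 ≥ 2`) with all its vertices in the finite set `S`,
in the directed graph with edge relation `E`: a sequence of distinct vertices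
`v 0, v 1, …` with a directed edge from each vertex to the (cyclically) next one. -/
def HasDirCycleIn (E : ℕ → ℕ → Prop) (S : Finset ℕ) : Prop :=
  ∃ k : ℕ, ∃ v : Fin (k + 2) → ℕ,
    Function.Injective v ∧ (∀ i, v i ∈ S) ∧ ∀ i, E (v i) (v (i + 1))

/-- `MAIS` of the subgraph induced by `S` of the directed graph with edge relation `E`:
the maximum cardinality of a subset `T ⊆ S` whose induced subgraph contains no directed
cycle. -/
noncomputable def maisOn (E : ℕ → ℕ → Prop) (S : Finset ℕ) : ℕ :=
  sSup {n : ℕ | ∃ T : Finset ℕ, T ⊆ S ∧ T.card = n ∧ ¬ HasDirCycleIn E T}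

/-- The independence number of the subgraph of `G` induced by the finite vertex set `S`:
the maximum cardinality of a set `T ⊆ S` of pairwise non-adjacent vertices. -/
noncomputable def alphaOn (G : SimpleGraph ℕ) (S : Finset ℕ) : ℕ :=
  sSup {n : ℕ | ∃ T : Finset ℕ, T ⊆ S ∧ T.card = n ∧ ∀ a ∈ T, ∀ b ∈ T, ¬ G.Adj a b}

/-- A valid index code of length `ℓ` with locality `1` and message length `m`, over the
alphabet `A`, for the three-receiver unicast problem `B*_S` determined by the message subset
`S ⊆ {1, …, 12}`.  The messages are `x j ∈ A ^ m` for `j ∈ S`.  It consists of an encoder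
`enc`, and for each receiver `i ∈ {1, 2, 3}` a set `R i` of at most `m * |Wᵢ ∩ S|` codeword
coordinates together with a decoder `dec i` which recovers the demanded messages
`(x j : j ∈ Wᵢ ∩ S)` from the observed codeword symbols `(enc x k : k ∈ R i)` and the side
information `(x j : j ∈ Kᵢ ∩ S)`. -/
structure ValidIndexCode (A : Type*) [Fintype A] (m ℓ : ℕ) (S : Finset ℕ) where
  enc : ({j : ℕ // j ∈ S} → Fin m → A) → Fin ℓ → A
  R : Fin 3 → Finset (Fin ℓ)
  locality : ∀ i : Fin 3, (R i).card ≤ m * (Wset i ∩ S).card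
  dec : ∀ i : Fin 3, ({k : Fin ℓ // k ∈ R i} → A) →
    ({j : ℕ // j ∈ Kset i ∩ S} → Fin m → A) → ({j : ℕ // j ∈ Wset i ∩ S} → Fin m → A)
  correct : ∀ (x : {j : ℕ // j ∈ S} → Fin m → A) (i : Fin 3)
      (j : {j : ℕ // j ∈ Wset i ∩ S}),
    dec i (fun k => enc x k.1) (fun j' => x ⟨j'.1, (Finset.mem_inter.mp j'.2).2⟩) j =
      x ⟨j.1, (Finset.mem_inter.mp j.2).2⟩

open Finset

instance : DecidableRel Gedge := fun a b =>
  decidable_of_iff (∃ i : Fin 3, a ∈ Wset i ∧ b ∈ Kset i) Iff.rfl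

instance : DecidableRel Gu.Adj := fun a b =>
  decidable_of_iff (a ≠ b ∧ Gedge a b ∧ Gedge b a) Iff.rfl

theorem wset_subset_Icc : ∀ i, Wset i ⊆ Icc 1 12 := by decide

theorem kset_subset_Icc : ∀ i, Kset i ⊆ Icc 1 12 := by decide

theorem disjoint_wset_kset : ∀ i, Disjoint (Wset i) (Kset i) := by decide

theorem disjoint_wset : ∀ i j, i ≠ j → Disjoint (Wset i) (Wset j) := by decide

theorem Gedge.mem_Icc {a b : ℕ} (h : Gedge a b) : a ∈ Icc 1 12 ∧ b ∈ Icc 1 12 :=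
  let ⟨i, ha, hb⟩ := h
  ⟨wset_subset_Icc i ha, kset_subset_Icc i hb⟩

theorem Gedge.ne {a b : ℕ} (h : Gedge a b) : a ≠ b := by
  obtain ⟨i, ha, hb⟩ := h
  rintro rfl
  exact disjoint_left.1 (disjoint_wset_kset i) ha hb

theorem oneWay_path_middle_mem : ∀ a ∈ Icc 1 12, ∀ b ∈ Icc 1 12, ∀ c ∈ Icc 1 12,
    Gedge a b → ¬ Gedge b a → Gedge b c → ¬ Gedge c b →
      b ∈ ({2, 3, 6, 7, 10, 11} : Finset ℕ) := by
  decide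

def triangles : Finset (Finset ℕ) := {{3, 6, 11}, {2, 7, 10}}

theorem oneWay_path_mem_triangles : ∀ a ∈ ({2, 3, 6, 7, 10, 11} : Finset ℕ),
    ∀ b ∈ ({2, 3, 6, 7, 10, 11} : Finset ℕ), ∀ c ∈ ({2, 3, 6, 7, 10, 11} : Finset ℕ),
    Gedge a b → ¬ Gedge b a → Gedge b c → ¬ Gedge c b → {a, b, c} ∈ triangles := by
  decide

def guNonNeighbors (t : Finset ℕ) : Finset ℕ :=
  (Icc 1 12).filter fun y => ∀ s ∈ t, ¬ Gu.Adj y s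

theorem exists_exchange : ∀ t ∈ triangles, ∀ a ∈ Icc 1 12, ∀ b ∈ Icc 1 12,
    Gu.Adj a b → ∃ c ∈ ({a, b} : Finset ℕ), ∃ x ∈ t, c ∉ guNonNeighbors t ∧
      (∀ u ∈ insert c ((guNonNeighbors t).erase x), ∀ w ∈ insert c ((guNonNeighbors t).erase x),
        ¬ Gu.Adj u w) ∧ ∀ t' ∈ triangles, ¬ t' ⊆ insert c ((guNonNeighbors t).erase x) := by
  decide

theorem HasDirCycleIn.mono {E : ℕ → ℕ → Prop} {T T' : Finset ℕ} (hTT' : T ⊆ T')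
    (h : HasDirCycleIn E T) : HasDirCycleIn E T' :=
  let ⟨k, v, hinj, hmem, hedge⟩ := h
  ⟨k, v, hinj, fun i => hTT' (hmem i), hedge⟩

theorem exists_triangle_subset_of_hasDirCycleIn {T : Finset ℕ}
    (hT : ∀ a ∈ T, ∀ b ∈ T, ¬ Gu.Adj a b) (h : HasDirCycleIn Gedge T) :
    ∃ t ∈ triangles, t ⊆ T := by
  obtain ⟨k, v, -, hmem, hedge⟩ := h
  have hback : ∀ i, ¬ Gedge (v (i + 1)) (v i) := fun i hb =>
    hT _ (hmem i) _ (hmem (i + 1)) ⟨(hedge i).ne, hedge i, hb⟩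
  have hcore : ∀ i, v i ∈ ({2, 3, 6, 7, 10, 11} : Finset ℕ) := by
    intro i
    have hin := hedge (i - 1)
    have hin' := hback (i - 1)
    rw [sub_add_cancel] at hin hin'
    exact oneWay_path_middle_mem _ (hedge (i - 1)).mem_Icc.1 _ (hedge i).mem_Icc.1 _
      (hedge i).mem_Icc.2 hin hin' (hedge i) (hback i)
  refine ⟨_, oneWay_path_mem_triangles _ (hcore 0) _ (hcore (0 + 1)) _ (hcore (0 + 1 + 1))
    (hedge 0) (hback 0) (hedge (0 + 1)) (hback (0 + 1)), ?_⟩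
  simp only [insert_subset_iff, singleton_subset_iff, hmem, and_self]

theorem alphaOn_le_maisOn {G : SimpleGraph ℕ} {E : ℕ → ℕ → Prop} {S : Finset ℕ}
    (h : ∀ T ⊆ S, (∀ a ∈ T, ∀ b ∈ T, ¬ G.Adj a b) →
      ∃ T' ⊆ S, T'.card = T.card ∧ ¬ HasDirCycleIn E T') :
    alphaOn G S ≤ maisOn E S := by
  refine csSup_le_csSup ⟨S.card, ?_⟩ ⟨0, ∅, by simp⟩ ?_
  · rintro n ⟨T, hTS, rfl, -⟩
    exact card_le_card hTS
  · rintro n ⟨T, hTS, rfl, hT⟩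
    exact h T hTS hT

theorem exists_acyclic_of_indep {S : Finset ℕ} (hS : S ⊆ Icc 1 12) {a b : ℕ}
    (ha : a ∈ S) (hb : b ∈ S) (hab : Gu.Adj a b) {T : Finset ℕ} (hTS : T ⊆ S)
    (hT : ∀ a ∈ T, ∀ b ∈ T, ¬ Gu.Adj a b) :
    ∃ T' ⊆ S, T'.card = T.card ∧ ¬ HasDirCycleIn Gedge T' := by
  by_cases hcyc : HasDirCycleIn Gedge T
  swap
  · exact ⟨T, hTS, rfl, hcyc⟩
  obtain ⟨t, ht, htT⟩ := exists_triangle_subset_of_hasDirCycleIn hT hcyc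
  have hTN : T ⊆ guNonNeighbors t := fun y hy =>
    mem_filter.2 ⟨hS (hTS hy), fun s hs => hT y hy s (htT hs)⟩
  obtain ⟨c, hc, x, hx, hcN, hU, hUt⟩ :=
    exists_exchange t ht a hab.2.1.mem_Icc.1 b hab.2.1.mem_Icc.2 hab
  have hcS : c ∈ S := by
    rcases mem_insert.1 hc with rfl | hc
    · exact ha
    · rwa [mem_singleton.1 hc]
  refine ⟨insert c (T.erase x), insert_subset hcS ((T.erase_subset x).trans hTS), ?_, ?_⟩
  · rw [card_insert_of_notMem fun hc' => hcN (hTN (mem_of_mem_erase hc')),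
      card_erase_add_one (htT hx)]
  · intro hcyc'
    have hsub : insert c (T.erase x) ⊆ insert c ((guNonNeighbors t).erase x) :=
      insert_subset_insert c (erase_subset_erase x hTN)
    obtain ⟨t', ht', ht'U⟩ := exists_triangle_subset_of_hasDirCycleIn hU (hcyc'.mono hsub)
    exact hUt t' ht' ht'U

theorem gu_adj_of_mem_kset {i j : Fin 3} {a b : ℕ} (haW : a ∈ Wset i) (haK : a ∈ Kset j)
    (hbW : b ∈ Wset j) (hbK : b ∈ Kset i) : Gu.Adj a b :=
  ⟨(show Gedge a b from ⟨i, haW, hbK⟩).ne, ⟨i, haW, hbK⟩, ⟨j, hbW, haK⟩⟩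

namespace ValidIndexCode

variable {A : Type*} [Fintype A] {m ℓ : ℕ} {S : Finset ℕ} (code : ValidIndexCode A m ℓ S)

theorem eq_of_mem_wset {x x' : {j : ℕ // j ∈ S} → Fin m → A} (i : Fin 3)
    (hobs : ∀ k ∈ code.R i, code.enc x k = code.enc x' k)
    (hside : ∀ t : {j : ℕ // j ∈ S}, t.1 ∈ Kset i → x t = x' t)
    (t : {j : ℕ // j ∈ S}) (ht : t.1 ∈ Wset i) : x t = x' t := by
  have htS : t.1 ∈ Wset i ∩ S := mem_inter.2 ⟨ht, t.2⟩
  calc x t = _ := (code.correct x i ⟨t.1, htS⟩).symm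
    _ = _ := by
      congr 1
      · exact funext fun k => hobs k.1 k.2
      · exact funext fun k => hside _ (mem_inter.1 k.2).1
    _ = x' t := code.correct x' i ⟨t.1, htS⟩

theorem eq_of_enc_eq {i j : Fin 3} (hK : ∀ a ∈ S, a ∈ Wset i → a ∉ Kset j)
    {x x' : {j : ℕ // j ∈ S} → Fin m → A}
    (hout : ∀ t : {j : ℕ // j ∈ S}, t.1 ∉ Wset i → t.1 ∉ Wset j → x t = x' t)
    (hobs : ∀ k ∈ code.R i ∪ code.R j, code.enc x k = code.enc x' k) : x = x' := by
  have hj : ∀ t : {j : ℕ // j ∈ S}, t.1 ∈ Wset j → x t = x' t :=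
    code.eq_of_mem_wset j (fun k hk => hobs k (mem_union_right _ hk)) fun t htK =>
      hout t (fun htW => hK t.1 t.2 htW htK)
        (disjoint_right.1 (disjoint_wset_kset j) htK)
  have hi : ∀ t : {j : ℕ // j ∈ S}, t.1 ∈ Wset i → x t = x' t :=
    code.eq_of_mem_wset i (fun k hk => hobs k (mem_union_left _ hk)) fun t htK =>
      if htW : t.1 ∈ Wset j then hj t htW
      else hout t (disjoint_right.1 (disjoint_wset_kset i) htK) htW
  funext t
  exact if hti : t.1 ∈ Wset i then hi t hti
    else if htj : t.1 ∈ Wset j then hj t htj else hout t hti htj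

theorem inter_R_eq_empty (hA : 2 ≤ Fintype.card A) {i j : Fin 3} (hij : i ≠ j)
    (hK : ∀ a ∈ S, a ∈ Wset i → a ∉ Kset j) : code.R i ∩ code.R j = ∅ := by
  obtain ⟨a₀⟩ : Nonempty A := Fintype.card_pos_iff.1 (by omega)
  let extend : ({t : ℕ // t ∈ (Wset i ∪ Wset j) ∩ S} → Fin m → A) →
      {t : ℕ // t ∈ S} → Fin m → A :=
    fun y t => if h : t.1 ∈ Wset i ∪ Wset j then y ⟨t.1, mem_inter.2 ⟨h, t.2⟩⟩
      else fun _ => a₀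
  have hinj : Function.Injective fun y (k : {k // k ∈ code.R i ∪ code.R j}) =>
      code.enc (extend y) k.1 := by
    intro y y' hyy'
    have hext : extend y = extend y' := code.eq_of_enc_eq hK
      (fun t hti htj => by simp [extend, hti, htj])
      (fun k hk => congrFun hyy' ⟨k, hk⟩)
    funext t
    simpa only [extend, dif_pos (mem_inter.1 t.2).1] using
      congrFun hext ⟨t.1, (mem_inter.1 t.2).2⟩
  have hcard := Fintype.card_le_of_injective _ hinj
  simp only [Fintype.card_fun, Fintype.card_coe, Fintype.card_fin, ← pow_mul] at hcard
  have hU : ((Wset i ∪ Wset j) ∩ S).card = (Wset i ∩ S).card + (Wset j ∩ S).card := by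
    rw [union_inter_distrib_right, card_union_of_disjoint]
    exact (disjoint_wset i j hij).mono inter_subset_left inter_subset_left
  have hle := (Nat.pow_le_pow_iff_right (by omega : 1 < Fintype.card A)).1 hcard
  rw [hU, mul_add] at hle
  have := card_union_add_card_inter (code.R i) (code.R j)
  have := code.locality i
  have := code.locality j
  rw [← card_eq_zero]
  linarith

end ValidIndexCode

theorem observation_sets_disjoint_general (S : Finset ℕ) (hS : S ⊆ Finset.Icc 1 12)
    (h : maisOn Gedge S < alphaOn Gu S)
    (A : Type*) [Fintype A] (hA : 2 ≤ Fintype.card A)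
    (m : ℕ) (ℓ : ℕ) (code : ValidIndexCode A m ℓ S) :
    ∀ i j : Fin 3, i < j → code.R i ∩ code.R j = ∅ := by
  intro i j hij
  have hindep : ∀ a ∈ S, ∀ b ∈ S, ¬ Gu.Adj a b := fun a ha b hb hab =>
    (alphaOn_le_maisOn fun _ hTS hT => exists_acyclic_of_indep hS ha hb hab hTS hT).not_gt h
  by_cases hK : ∀ a ∈ S, a ∈ Wset i → a ∉ Kset j
  · exact code.inter_R_eq_empty hA hij.ne hK
  · push Not at hK
    obtain ⟨a, haS, haW, haK⟩ := hK
    rw [inter_comm]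
    exact code.inter_R_eq_empty hA hij.ne' fun b hbS hbW hbK =>
      hindep a haS b hbS (gu_adj_of_mem_kset haW haK hbW hbK)

/-- If `MAIS(G*_S) < α(G*_{S,u})`, then for every alphabet of size at least `2` and every
valid index code with locality `1` for `B*_S`, the observation sets of distinct receivers are
disjoint. -/
theorem observation_sets_disjoint (S : Finset ℕ) (hS : S ⊆ Finset.Icc 1 12)
    (h : maisOn Gedge S < alphaOn Gu S)
    (A : Type*) [Fintype A] (hA : 2 ≤ Fintype.card A)
    (m : ℕ) (hm : 0 < m) (ℓ : ℕ) (code : ValidIndexCode A m ℓ S) :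
    ∀ i j : Fin 3, i < j → code.R i ∩ code.R j = ∅ :=
  observation_sets_disjoint_general S hS h A hA m ℓ code
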